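/- arXiv:2305.14939 — 3 statements merged into one kernel-verified Lean document; each statement's English description precedes it below -/
import Mathlib

section
/- Let a, b ∈ Δₙ be strictly positive probability vectors, C ∈ ℝ₊^{n×n}, γ > 0, K := exp(−C/γ). Let (f_k, g_k) be the Sinkhorn iterates starting from arbitrary f₀, g₀ ∈ ℝⁿ, and P_k := diag(e^{f_k/γ}) K diag(e^{g_k/γ}). Then for every even k ≥ 2, h(f_{k+1}, g_{k+1}) − h(f_k, g_k) = γ · KL(a ‖ P_k𝟏ₙ), where P_k𝟏ₙ is the vector of row sums of P_k. -/
/-- The dual entropic OT objective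
`h(f,g) = ⟨f,a⟩ + ⟨g,b⟩ − γ Σ_{i,j} exp((f_i + g_j − C_{ij})/γ)`. -/
noncomputable def dualObj {n : ℕ} (a b : Fin n → ℝ) (C : Matrix (Fin n) (Fin n) ℝ)
    (γ : ℝ) (f g : Fin n → ℝ) : ℝ :=
  (∑ i, f i * a i) + (∑ j, g j * b j) -
    γ * ∑ i, ∑ j, Real.exp ((f i + g j - C i j) / γ)

/-- The transport plan `P = diag(e^{f/γ}) K diag(e^{g/γ})` with `K = exp(−C/γ)`. -/
noncomputable def plan {n : ℕ} (C : Matrix (Fin n) (Fin n) ℝ) (γ : ℝ)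
    (f g : Fin n → ℝ) : Matrix (Fin n) (Fin n) ℝ :=
  fun i j => Real.exp (f i / γ) * Real.exp (-C i j / γ) * Real.exp (g j / γ)

/-- `(f k, g k)` is the sequence of Sinkhorn iterates (in dual form): for even `k`,
`f (k+1) = γ log a − γ log (K e^{g k / γ})` and `g (k+1) = g k`; for odd `k`,
`f (k+1) = f k` and `g (k+1) = γ log b − γ log (Kᵀ e^{f k / γ})`,
where `K = exp(−C/γ)`. -/
def SinkhornSeq {n : ℕ} (a b : Fin n → ℝ) (C : Matrix (Fin n) (Fin n) ℝ) (γ : ℝ)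
    (f g : ℕ → Fin n → ℝ) : Prop :=
  ∀ k : ℕ,
    (Even k →
      f (k+1) = (fun i => γ * Real.log (a i) -
        γ * Real.log (∑ j, Real.exp (-C i j / γ) * Real.exp (g k j / γ))) ∧
      g (k+1) = g k) ∧
    (¬ Even k →
      f (k+1) = f k ∧
      g (k+1) = (fun j => γ * Real.log (b j) -
        γ * Real.log (∑ i, Real.exp (-C i j / γ) * Real.exp (f k i / γ))))

/-!
For even `k ≥ 2` the previous half-step was a column update, so `P_k` has column sums `b` and
total mass `∑ b = 1`; the row update produces `P_{k+1}` with row sums `a` and total mass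
`∑ a = 1`. Since `g` is unchanged and `h(f,g) = ⟨f,a⟩ + ⟨g,b⟩ − γ · mass(P)`, the gain
is `⟨f_{k+1} − f_k, a⟩`, and `f_{k+1,i} − f_{k,i} = γ log (a_i / (P_k 𝟏)_i)`.
-/

open Finset
open scoped Matrix

/-- The column update of `SinkhornSeq` is `rowUpdate b Cᵀ γ f`. -/
noncomputable def rowUpdate {n : ℕ} (a : Fin n → ℝ) (C : Matrix (Fin n) (Fin n) ℝ) (γ : ℝ)
    (g : Fin n → ℝ) : Fin n → ℝ :=
  fun i => γ * Real.log (a i) - γ * Real.log (∑ j, Real.exp (-C i j / γ) * Real.exp (g j / γ))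

section

variable {n : ℕ} (C : Matrix (Fin n) (Fin n) ℝ) (γ : ℝ)

theorem plan_apply (f g : Fin n → ℝ) (i j : Fin n) :
    plan C γ f g i j = Real.exp ((f i + g j - C i j) / γ) := by
  rw [plan, ← Real.exp_add, ← Real.exp_add]
  congr 1
  ring

theorem plan_transpose (f g : Fin n → ℝ) : plan Cᵀ γ g f = (plan C γ f g)ᵀ := by
  ext i j
  simp only [plan, Matrix.transpose_apply]
  ring

theorem dualObj_eq (a b f g : Fin n → ℝ) :
    dualObj a b C γ f g =
      (∑ i, f i * a i) + (∑ j, g j * b j) - γ * ∑ i, ∑ j, plan C γ f g i j := by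
  simp only [dualObj, plan_apply]

theorem sum_plan_row (f g : Fin n → ℝ) (i : Fin n) :
    ∑ j, plan C γ f g i j =
      Real.exp (f i / γ) * ∑ j, Real.exp (-C i j / γ) * Real.exp (g j / γ) := by
  rw [mul_sum]
  exact sum_congr rfl fun j _ => by rw [plan, mul_assoc]

theorem sum_exp_mul_exp_pos (g : Fin n → ℝ) (i : Fin n) :
    0 < ∑ j, Real.exp (-C i j / γ) * Real.exp (g j / γ) :=
  sum_pos (fun j _ => by positivity) ⟨i, mem_univ i⟩

variable {γ}

theorem exp_rowUpdate_div (hγ : γ ≠ 0) {a : Fin n → ℝ} (ha : ∀ i, 0 < a i)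
    (g : Fin n → ℝ) (i : Fin n) :
    Real.exp (rowUpdate a C γ g i / γ) =
      a i / ∑ j, Real.exp (-C i j / γ) * Real.exp (g j / γ) := by
  rw [rowUpdate, ← mul_sub, mul_div_cancel_left₀ _ hγ, Real.exp_sub, Real.exp_log (ha i),
    Real.exp_log (sum_exp_mul_exp_pos C γ g i)]

theorem sum_plan_rowUpdate_row (hγ : γ ≠ 0) {a : Fin n → ℝ} (ha : ∀ i, 0 < a i)
    (g : Fin n → ℝ) (i : Fin n) :
    ∑ j, plan C γ (rowUpdate a C γ g) g i j = a i := by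
  rw [sum_plan_row, exp_rowUpdate_div C hγ ha,
    div_mul_cancel₀ _ (sum_exp_mul_exp_pos C γ g i).ne']

theorem sum_plan_rowUpdate_col (hγ : γ ≠ 0) {b : Fin n → ℝ} (hb : ∀ j, 0 < b j)
    (f : Fin n → ℝ) (j : Fin n) :
    ∑ i, plan C γ f (rowUpdate b Cᵀ γ f) i j = b j := by
  simpa only [plan_transpose, Matrix.transpose_apply] using
    sum_plan_rowUpdate_row Cᵀ hγ hb f j

theorem rowUpdate_sub (hγ : γ ≠ 0) {a : Fin n → ℝ} (ha : ∀ i, 0 < a i)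
    (f g : Fin n → ℝ) (i : Fin n) :
    rowUpdate a C γ g i - f i = γ * Real.log (a i / ∑ j, plan C γ f g i j) := by
  have hS := sum_exp_mul_exp_pos C γ g i
  rw [sum_plan_row, Real.log_div (ha i).ne' (by positivity),
    Real.log_mul (Real.exp_ne_zero _) hS.ne', Real.log_exp, rowUpdate]
  field_simp
  ring

end

theorem sinkhorn_one_step_KL_general {n : ℕ} (a b : Fin n → ℝ)
    (C : Matrix (Fin n) (Fin n) ℝ) (γ : ℝ) (hγ : 0 < γ)
    (ha0 : ∀ i, 0 < a i) (hb0 : ∀ j, 0 < b j)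
    (ha1 : ∑ i, a i = 1) (hb1 : ∑ j, b j = 1)
    (f g : ℕ → Fin n → ℝ) (hiter : SinkhornSeq a b C γ f g)
    (k : ℕ) (hk : 2 ≤ k) (hke : Even k) :
    dualObj a b C γ (f (k+1)) (g (k+1)) - dualObj a b C γ (f k) (g k) =
      γ * ∑ i, a i * Real.log (a i / (∑ j, plan C γ (f k) (g k) i j)) := by
  obtain ⟨m, rfl⟩ : ∃ m, k = m + 1 := ⟨k - 1, by omega⟩
  obtain ⟨hf, hg⟩ := (hiter m).2 (Nat.even_add_one.mp hke)
  obtain ⟨hf', hg'⟩ := (hiter (m + 1)).1 hke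
  change f (m + 1 + 1) = rowUpdate a C γ (g (m + 1)) at hf'
  change g (m + 1) = rowUpdate b Cᵀ γ (f m) at hg
  have hcol : ∀ j, ∑ i, plan C γ (f (m + 1)) (g (m + 1)) i j = b j := by
    rw [hf, hg]; exact sum_plan_rowUpdate_col C hγ.ne' hb0 (f m)
  have hrow : ∀ i, ∑ j, plan C γ (f (m + 1 + 1)) (g (m + 1)) i j = a i := by
    rw [hf']; exact sum_plan_rowUpdate_row C hγ.ne' ha0 (g (m + 1))
  have hgain : ∀ i, (f (m + 1 + 1) i - f (m + 1) i) * a i =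
      γ * (a i * Real.log (a i / ∑ j, plan C γ (f (m + 1)) (g (m + 1)) i j)) := fun i => by
    rw [hf', rowUpdate_sub C hγ.ne' ha0]; ring
  have hmass : ∑ i, ∑ j, plan C γ (f (m + 1)) (g (m + 1)) i j = 1 :=
    sum_comm.trans ((sum_congr rfl fun j _ => hcol j).trans hb1)
  have hmass' : ∑ i, ∑ j, plan C γ (f (m + 1 + 1)) (g (m + 1)) i j = 1 :=
    (sum_congr rfl fun i _ => hrow i).trans ha1
  rw [hg', dualObj_eq, dualObj_eq, hmass, hmass', mul_sum, ← sum_congr rfl fun i _ => hgain i]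
  simp only [sub_mul, sum_sub_distrib]
  ring

/-- **One-iteration improvement of Sinkhorn as a KL divergence**: for even `k ≥ 2`,
`h(f_{k+1},g_{k+1}) − h(f_k,g_k) = γ · KL(a ‖ P_k𝟏)`. -/
theorem sinkhorn_one_step_KL {n : ℕ} (a b : Fin n → ℝ)
    (C : Matrix (Fin n) (Fin n) ℝ) (γ : ℝ) (hγ : 0 < γ)
    (ha0 : ∀ i, 0 < a i) (hb0 : ∀ j, 0 < b j)
    (ha1 : ∑ i, a i = 1) (hb1 : ∑ j, b j = 1)
    (hC : ∀ i j, 0 ≤ C i j)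
    (f g : ℕ → Fin n → ℝ) (hiter : SinkhornSeq a b C γ f g)
    (k : ℕ) (hk : 2 ≤ k) (hke : Even k) :
    dualObj a b C γ (f (k+1)) (g (k+1)) - dualObj a b C γ (f k) (g k) =
      γ * ∑ i, a i * Real.log (a i / (∑ j, plan C γ (f k) (g k) i j)) :=
  sinkhorn_one_step_KL_general a b C γ hγ ha0 hb0 ha1 hb1 f g hiter k hk hke
end

section
/- Let a, b ∈ ℝ_{++}ⁿ be strictly positive probability vectors, C ∈ ℝ₊^{n×n}, γ > 0. For any g ∈ ℝⁿ, let g^{(C,γ)‾} ∈ ℝⁿ be its (C,γ)‾-transform, i.e. g^{(C,γ)‾}_i = γ log a_i − γ log Σ_{j=1}^n exp((g_j − C_{ij})/γ) for each i. Then max_i (g^{(C,γ)‾}_i − γ log a_i) − min_i (g^{(C,γ)‾}_i − γ log a_i) ≤ max_{i,j} C_{ij} − min_{i,j} C_{ij} ≤ ‖C‖_∞. -/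
/-! Each entry of `G - γ log a` is a soft-min `-γ log Σ_j exp((g_j - C_ij)/γ)` of `g - C_i`.
The soft-min is monotone and commutes with adding constants, so it is 1-Lipschitz for the
sup norm; two rows of `C` differ entrywise by at most `max C - min C`, hence so do any two
entries of `G - γ log a`. -/

open Real

section LogSumExp

variable {ι : Type*} [Fintype ι] [Nonempty ι]

theorem log_sum_exp_le_log_sum_exp_add {x y : ι → ℝ} {c : ℝ} (h : ∀ j, x j ≤ y j + c) :
    log (∑ j, exp (x j)) ≤ log (∑ j, exp (y j)) + c := by
  have hpos : 0 < ∑ j, exp (y j) := Finset.sum_pos (fun j _ => exp_pos _) Finset.univ_nonempty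
  calc log (∑ j, exp (x j))
      ≤ log (∑ j, exp (y j + c)) :=
        log_le_log (Finset.sum_pos (fun j _ => exp_pos _) Finset.univ_nonempty)
          (Finset.sum_le_sum fun j _ => exp_le_exp.mpr (h j))
    _ = log (∑ j, exp (y j)) + c := by
        simp_rw [exp_add, ← Finset.sum_mul]
        rw [log_mul hpos.ne' (exp_pos c).ne', log_exp]

theorem mul_log_sum_exp_sub_le {γ : ℝ} (hγ : 0 < γ) (g u v : ι → ℝ) {D : ℝ}
    (h : ∀ j, u j - v j ≤ D) :
    γ * log (∑ j, exp ((g j - v j) / γ)) - γ * log (∑ j, exp ((g j - u j) / γ)) ≤ D := by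
  have hshift : ∀ j, (g j - v j) / γ ≤ (g j - u j) / γ + D / γ := fun j => by
    rw [← add_div]
    exact div_le_div_of_nonneg_right (by linarith [h j]) hγ.le
  have := mul_le_mul_of_nonneg_left (log_sum_exp_le_log_sum_exp_add hshift) hγ.le
  rwa [mul_add, mul_div_cancel₀ _ hγ.ne', ← sub_le_iff_le_add'] at this

end LogSumExp

theorem ciSup_sub_ciInf_le {ι : Type*} [Nonempty ι] {f : ι → ℝ} {D : ℝ}
    (h : ∀ i k, f i - f k ≤ D) : (⨆ i, f i) - (⨅ i, f i) ≤ D :=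
  sub_le_comm.mp <| le_ciInf fun k => sub_le_iff_le_add.mpr <| ciSup_le fun i =>
    sub_le_iff_le_add'.mp (h i k)

section FiniteExtrema

variable {ι κ : Type*} [Finite ι] [Finite κ]

theorem le_ciSup₂_of_finite (C : ι → κ → ℝ) (i : ι) (j : κ) : C i j ≤ ⨆ i, ⨆ j, C i j :=
  (le_ciSup (Set.finite_range _).bddAbove j).trans
    (le_ciSup (Set.finite_range fun i => ⨆ j, C i j).bddAbove i)

theorem ciInf₂_le_of_finite (C : ι → κ → ℝ) (i : ι) (j : κ) : ⨅ i, ⨅ j, C i j ≤ C i j :=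
  (ciInf_le (Set.finite_range fun i => ⨅ j, C i j).bddBelow i).trans
    (ciInf_le (Set.finite_range _).bddBelow j)

theorem ciSup₂_sub_ciInf₂_le_ciSup₂_abs [Nonempty ι] [Nonempty κ] {C : ι → κ → ℝ}
    (hC : ∀ i j, 0 ≤ C i j) :
    (⨆ i, ⨆ j, C i j) - (⨅ i, ⨅ j, C i j) ≤ ⨆ i, ⨆ j, |C i j| := by
  have hmin : 0 ≤ ⨅ i, ⨅ j, C i j := le_ciInf fun i => le_ciInf fun j => hC i j
  have hmax : (⨆ i, ⨆ j, C i j) ≤ ⨆ i, ⨆ j, |C i j| :=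
    ciSup_le fun i => ciSup_le fun j =>
      (le_abs_self _).trans (le_ciSup₂_of_finite (fun i j => |C i j|) i j)
  linarith

end FiniteExtrema

theorem c_bar_transform_equicontinuity_general {n : ℕ} (hn : 0 < n)
    (a : Fin n → ℝ) (C : Matrix (Fin n) (Fin n) ℝ) (γ : ℝ) (hγ : 0 < γ)
    (hC : ∀ i j, 0 ≤ C i j)
    (g G : Fin n → ℝ)
    (hG : ∀ i, G i = γ * Real.log (a i) -
      γ * Real.log (∑ j, Real.exp ((g j - C i j) / γ))) :
    (⨆ i, (G i - γ * Real.log (a i))) - (⨅ i, (G i - γ * Real.log (a i))) ≤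
        (⨆ i, ⨆ j, C i j) - (⨅ i, ⨅ j, C i j) ∧
      (⨆ i, ⨆ j, C i j) - (⨅ i, ⨅ j, C i j) ≤ ⨆ i, ⨆ j, |C i j| := by
  have : Nonempty (Fin n) := Fin.pos_iff_nonempty.mp hn
  refine ⟨?_, ciSup₂_sub_ciInf₂_le_ciSup₂_abs hC⟩
  refine ciSup_sub_ciInf_le fun i k => ?_
  have hrows : ∀ j, C i j - C k j ≤ (⨆ i, ⨆ j, C i j) - (⨅ i, ⨅ j, C i j) := fun j =>
    sub_le_sub (le_ciSup₂_of_finite C i j) (ciInf₂_le_of_finite C k j)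
  have := mul_log_sum_exp_sub_le hγ g (C i) (C k) hrows
  rw [hG i, hG k]
  linarith

/-- **Equicontinuity of the (C,γ)‾-transform** (Lemma 4 of the paper).
For strictly positive probability vectors `a, b`, `C ≥ 0`, `γ > 0` and any `g`,
the `(C,γ)‾`-transform `G_i = γ log a_i − γ log Σ_j exp((g_j − C_{ij})/γ)` satisfies
`max_i(G_i − γ log a_i) − min_i(G_i − γ log a_i) ≤ max C − min C ≤ ‖C‖_∞`. -/
theorem c_bar_transform_equicontinuity {n : ℕ} (hn : 0 < n)
    (a b : Fin n → ℝ) (C : Matrix (Fin n) (Fin n) ℝ) (γ : ℝ) (hγ : 0 < γ)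
    (ha0 : ∀ i, 0 < a i) (hb0 : ∀ j, 0 < b j)
    (ha1 : ∑ i, a i = 1) (hb1 : ∑ j, b j = 1)
    (hC : ∀ i j, 0 ≤ C i j)
    (g G : Fin n → ℝ)
    (hG : ∀ i, G i = γ * Real.log (a i) -
      γ * Real.log (∑ j, Real.exp ((g j - C i j) / γ))) :
    (⨆ i, (G i - γ * Real.log (a i))) - (⨅ i, (G i - γ * Real.log (a i))) ≤
        (⨆ i, ⨆ j, C i j) - (⨅ i, ⨅ j, C i j) ∧
      (⨆ i, ⨆ j, C i j) - (⨅ i, ⨅ j, C i j) ≤ ⨆ i, ⨆ j, |C i j| :=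
  c_bar_transform_equicontinuity_general hn a C γ hγ hC g G hG
end

section
/- Let a, b ∈ Δₙ be probability vectors, C ∈ ℝ₊^{n×n}, γ > 0, K := exp(−C/γ). Let B = diag(u) K diag(v) with u, v ∈ ℝ_{++}ⁿ (B is not required to be a probability matrix), and set E := ‖B𝟏ₙ − a‖₁ + ‖Bᵀ𝟏ₙ − b‖₁. Then every matrix B̂ ∈ Π(a,b) satisfying ‖B − B̂‖₁ ≤ 2E satisfies ⟨C, B̂⟩ ≤ min_{P ∈ Π(a,b)} ⟨C, P⟩ + (2 + E)γ log n + 4E‖C‖_∞. -/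
/-!
`B` minimises the entropic transport problem between its own marginals `r = B𝟏`, `c = Bᵀ𝟏`:
since `C = γ (log u ⊕ log v − log B)` and the potentials `log u`, `log v` integrate to the same
value against every `Q ∈ Π(r, c)`, Gibbs' inequality gives `⟨C, B⟩ ≤ ⟨C, Q⟩ + γ (Σ B) log n²`.
The rounding procedure of Altschuler, Weed and Rigollet (clip the rows, clip the columns, add a
rank-one correction) moves any `P ∈ Π(a, b)` to such a `Q` with `‖P − Q‖₁ ≤ 2E`. Each of the
moves `B̂ ↔ B` and `Q ↔ P` changes the cost by at most `2E‖C‖_∞`, and `2 Σ B ≤ 2 + E`.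
-/

open Finset Real Matrix

section Entropy

variable {α : Type*} [Fintype α]

lemma mul_log_sub_log_le_sub {p q : ℝ} (hp : 0 ≤ p) (hq : 0 < q) :
    p * (log q - log p) ≤ q - p := by
  rcases hp.eq_or_lt with rfl | hp
  · simpa using hq.le
  · have h := log_le_sub_one_of_pos (div_pos hq hp)
    rw [log_div hq.ne' hp.ne'] at h
    calc p * (log q - log p) ≤ p * (q / p - 1) := mul_le_mul_of_nonneg_left h hp.le
      _ = q - p := by field_simp

lemma sum_mul_log_le_sum_mul_log {p q : α → ℝ} (hp : ∀ x, 0 ≤ p x) (hq : ∀ x, 0 < q x)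
    (hpq : ∑ x, p x = ∑ x, q x) : ∑ x, p x * log (q x) ≤ ∑ x, p x * log (p x) := by
  have h := sum_le_sum fun x (_ : x ∈ univ) => mul_log_sub_log_le_sub (hp x) (hq x)
  simp only [mul_sub, sum_sub_distrib] at h
  linarith

lemma sum_mul_log_le_sum_mul_log_sum {p : α → ℝ} (hp : ∀ x, 0 ≤ p x) :
    ∑ x, p x * log (p x) ≤ (∑ x, p x) * log (∑ x, p x) := by
  rw [sum_mul]
  refine sum_le_sum fun x _ => ?_
  rcases (hp x).eq_or_lt with h | h
  · simp [← h]
  · exact mul_le_mul_of_nonneg_left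
      (log_le_log h (single_le_sum (fun y _ => hp y) (mem_univ x))) h.le

lemma sum_mul_log_sum_le [Nonempty α] {p : α → ℝ} (hp : ∀ x, 0 < p x) :
    (∑ x, p x) * log (∑ x, p x) ≤
      ∑ x, p x * log (p x) + (∑ x, p x) * log (Fintype.card α) := by
  have hs : 0 < ∑ x, p x := sum_pos (fun x _ => hp x) univ_nonempty
  have hN : (0 : ℝ) < Fintype.card α := by exact_mod_cast Fintype.card_pos
  have h := sum_mul_log_le_sum_mul_log (fun x => (hp x).le)
    (fun _ => div_pos hs hN) (q := fun _ => (∑ x, p x) / Fintype.card α)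
    (by simp [field])
  rw [← sum_mul, log_div hs.ne' hN.ne'] at h
  linarith

end Entropy

section Transport

variable {ι κ : Type*} [Fintype ι] [Fintype κ]

lemma sum_sum_mul_le_add_mul_sum_sum_abs_sub {C X Y : Matrix ι κ ℝ} {M : ℝ}
    (hM : ∀ i j, |C i j| ≤ M) :
    ∑ i, ∑ j, C i j * X i j ≤ ∑ i, ∑ j, C i j * Y i j + M * ∑ i, ∑ j, |Y i j - X i j| := by
  simp only [mul_sum, ← sum_add_distrib]
  refine sum_le_sum fun i _ => sum_le_sum fun j _ => ?_
  have h : C i j * (X i j - Y i j) ≤ M * |Y i j - X i j| := abs_sub_comm (Y i j) _ ▸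
    (le_abs_self _).trans ((abs_mul _ _).trans_le
      (mul_le_mul_of_nonneg_right (hM i j) (abs_nonneg _)))
  linarith

lemma sum_sum_add_mul_sub_eq_zero {X Y : Matrix ι κ ℝ} (f : ι → ℝ) (g : κ → ℝ)
    (hrow : ∀ i, ∑ j, X i j = ∑ j, Y i j) (hcol : ∀ j, ∑ i, X i j = ∑ i, Y i j) :
    ∑ i, ∑ j, (f i + g j) * (X i j - Y i j) = 0 := by
  have hf : ∀ i, ∑ j, f i * (X i j - Y i j) = 0 := fun i => by
    rw [← mul_sum, sum_sub_distrib, hrow, sub_self, mul_zero]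
  have hg : ∀ j, ∑ i, g j * (X i j - Y i j) = 0 := fun j => by
    rw [← mul_sum, sum_sub_distrib, hcol, sub_self, mul_zero]
  simp only [add_mul, sum_add_distrib, hf, zero_add]
  rw [sum_comm]
  simp only [hg, sum_const_zero]

theorem sum_sum_mul_le_of_eq_diag_mul_exp_mul_diag [Nonempty ι] [Nonempty κ]
    {C B Q : Matrix ι κ ℝ} {γ : ℝ} (hγ : 0 < γ) {u : ι → ℝ} {v : κ → ℝ}
    (hu : ∀ i, 0 < u i) (hv : ∀ j, 0 < v j)
    (hB : ∀ i j, B i j = u i * exp (-C i j / γ) * v j) (hQ : ∀ i j, 0 ≤ Q i j)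
    (hrow : ∀ i, ∑ j, Q i j = ∑ j, B i j) (hcol : ∀ j, ∑ i, Q i j = ∑ i, B i j) :
    ∑ i, ∑ j, C i j * B i j ≤
      ∑ i, ∑ j, C i j * Q i j +
        γ * (∑ i, ∑ j, B i j) * log (Fintype.card ι * Fintype.card κ) := by
  have hBpos : ∀ i j, 0 < B i j := fun i j => by
    rw [hB]; exact mul_pos (mul_pos (hu i) (exp_pos _)) (hv j)
  have hC : ∀ i j, C i j = γ * (log (u i) + log (v j) - log (B i j)) := fun i j => by
    rw [hB, log_mul (mul_pos (hu i) (exp_pos _)).ne' (hv j).ne', log_mul (hu i).ne' (exp_pos _).ne',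
      log_exp]
    field_simp
    ring
  have hmass : ∑ i, ∑ j, Q i j = ∑ i, ∑ j, B i j := sum_congr rfl fun i _ => hrow i
  have hgibbs := sum_mul_log_le_sum_mul_log (p := fun x : ι × κ => Q x.1 x.2)
    (q := fun x => B x.1 x.2) (fun x => hQ _ _) (fun x => hBpos _ _)
    (by simpa only [Fintype.sum_prod_type] using hmass)
  have hQent := sum_mul_log_le_sum_mul_log_sum (p := fun x : ι × κ => Q x.1 x.2) fun x => hQ _ _
  have hBent := sum_mul_log_sum_le (p := fun x : ι × κ => B x.1 x.2) fun x => hBpos _ _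
  simp only [Fintype.sum_prod_type, Fintype.card_prod, Nat.cast_mul, hmass] at hgibbs hQent hBent
  have hcost : ∑ i, ∑ j, C i j * B i j - ∑ i, ∑ j, C i j * Q i j =
      γ * (∑ i, ∑ j, Q i j * log (B i j) - ∑ i, ∑ j, B i j * log (B i j)) := by
    have hsep := sum_sum_add_mul_sub_eq_zero (fun i => log (u i)) (fun j => log (v j))
      (fun i => (hrow i).symm) (fun j => (hcol j).symm)
    rw [← sub_eq_zero, ← mul_zero γ, ← hsep]
    simp only [← sum_sub_distrib, mul_sum]
    refine sum_congr rfl fun i _ => sum_congr rfl fun j _ => ?_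
    rw [hC i j]
    ring
  have hentropy : γ * (∑ i, ∑ j, Q i j * log (B i j) - ∑ i, ∑ j, B i j * log (B i j)) ≤
      γ * ((∑ i, ∑ j, B i j) * log (Fintype.card ι * Fintype.card κ)) :=
    mul_le_mul_of_nonneg_left (by linarith) hγ.le
  linarith

end Transport

section ClipRows

variable {ι κ : Type*} [Fintype κ]

noncomputable def clipRows (P : Matrix ι κ ℝ) (r : ι → ℝ) : Matrix ι κ ℝ :=
  fun i j => P i j * min 1 (r i / ∑ j, P i j)

variable {P : Matrix ι κ ℝ} {r : ι → ℝ}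

lemma clipRows_nonneg (hP : ∀ i j, 0 ≤ P i j) (hr : ∀ i, 0 ≤ r i) (i : ι) (j : κ) :
    0 ≤ clipRows P r i j :=
  mul_nonneg (hP i j) (le_min zero_le_one (div_nonneg (hr i) (sum_nonneg fun j _ => hP i j)))

lemma clipRows_le (hP : ∀ i j, 0 ≤ P i j) (i : ι) (j : κ) : clipRows P r i j ≤ P i j :=
  mul_le_of_le_one_right (hP i j) (min_le_left _ _)

lemma sum_clipRows (hP : ∀ i j, 0 ≤ P i j) (hr : ∀ i, 0 ≤ r i) (i : ι) :
    ∑ j, clipRows P r i j = min (∑ j, P i j) (r i) := by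
  simp only [clipRows, ← sum_mul]
  rcases (sum_nonneg fun j (_ : j ∈ univ) => hP i j).eq_or_lt with h | h
  · simp [← h, hr i]
  · rw [mul_min_of_nonneg _ _ h.le, mul_one, mul_div_cancel₀ _ h.ne']

end ClipRows

section Rounding

variable {ι κ : Type*} [Fintype ι] [Fintype κ]

lemma sum_sum_abs_sub_of_le {X Y : Matrix ι κ ℝ} (h : ∀ i j, X i j ≤ Y i j) :
    ∑ i, ∑ j, |Y i j - X i j| = ∑ i, ∑ j, Y i j - ∑ i, ∑ j, X i j := by
  simp only [abs_of_nonneg (sub_nonneg.2 (h _ _)), sum_sub_distrib]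

lemma exists_ge_of_sum_le {Y : Matrix ι κ ℝ} {r : ι → ℝ} {c : κ → ℝ}
    (hr : ∀ i, ∑ j, Y i j ≤ r i) (hc : ∀ j, ∑ i, Y i j ≤ c j) (hrc : ∑ i, r i = ∑ j, c j) :
    ∃ Q : Matrix ι κ ℝ, (∀ i j, Y i j ≤ Q i j) ∧ (∀ i, ∑ j, Q i j = r i) ∧
      ∀ j, ∑ i, Q i j = c j := by
  set er : ι → ℝ := fun i => r i - ∑ j, Y i j
  set ec : κ → ℝ := fun j => c j - ∑ i, Y i j
  have her : ∀ i, 0 ≤ er i := fun i => sub_nonneg.2 (hr i)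
  have hec : ∀ j, 0 ≤ ec j := fun j => sub_nonneg.2 (hc j)
  have hdefect : ∑ j, ec j = ∑ i, er i := by
    simp only [er, ec, sum_sub_distrib, hrc]
    rw [sum_comm]
  by_cases hΔ : ∑ i, er i = 0
  · have her0 := (sum_eq_zero_iff_of_nonneg fun i _ => her i).1 hΔ
    have hec0 := (sum_eq_zero_iff_of_nonneg fun j _ => hec j).1 (hdefect.trans hΔ)
    refine ⟨Y, fun i j => le_rfl, fun i => ?_, fun j => ?_⟩
    · linarith [her0 i (mem_univ i)]
    · linarith [hec0 j (mem_univ j)]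
  refine ⟨fun i j => Y i j + er i * ec j / ∑ i, er i, fun i j => ?_, fun i => ?_, fun j => ?_⟩
  · have : 0 ≤ er i * ec j / ∑ i, er i :=
      div_nonneg (mul_nonneg (her i) (hec j)) (sum_nonneg fun i _ => her i)
    linarith
  · rw [sum_add_distrib, ← sum_div, ← mul_sum, hdefect, mul_div_cancel_right₀ _ hΔ]
    ring
  · rw [sum_add_distrib, ← sum_div, ← sum_mul, mul_div_cancel_left₀ _ hΔ]
    ring

lemma sub_abs_sub_le_min {x b c : ℝ} (hxb : x ≤ b) : x - |c - b| ≤ min x c :=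
  le_min (by linarith [abs_nonneg (c - b)]) (by linarith [neg_le_abs (c - b)])

lemma add_sub_two_mul_min (a r : ℝ) : a + r - 2 * min a r = |r - a| := by
  rcases le_total a r with h | h
  · rw [min_eq_left h, abs_of_nonneg (sub_nonneg.2 h)]; ring
  · rw [min_eq_right h, abs_of_nonpos (sub_nonpos.2 h)]; ring

theorem exists_marginals_eq_sum_sum_abs_sub_le {P : Matrix ι κ ℝ} {a r : ι → ℝ} {b c : κ → ℝ}
    (hP : ∀ i j, 0 ≤ P i j) (hPr : ∀ i, ∑ j, P i j = a i) (hPc : ∀ j, ∑ i, P i j = b j)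
    (hr : ∀ i, 0 ≤ r i) (hc : ∀ j, 0 ≤ c j) (hrc : ∑ i, r i = ∑ j, c j) :
    ∃ Q : Matrix ι κ ℝ, (∀ i j, 0 ≤ Q i j) ∧ (∀ i, ∑ j, Q i j = r i) ∧
      (∀ j, ∑ i, Q i j = c j) ∧
      ∑ i, ∑ j, |P i j - Q i j| ≤ ∑ i, |r i - a i| + 2 * ∑ j, |c j - b j| := by
  set X := clipRows P r
  set Y := (clipRows Xᵀ c)ᵀ
  have hX : ∀ i j, 0 ≤ X i j := clipRows_nonneg hP hr
  have hY : ∀ i j, 0 ≤ Y i j := fun i j => clipRows_nonneg (fun j i => hX i j) hc j i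
  have hXP : ∀ i j, X i j ≤ P i j := clipRows_le hP
  have hYX : ∀ i j, Y i j ≤ X i j := fun i j => clipRows_le (fun j i => hX i j) j i
  have hXr : ∀ i, ∑ j, X i j = min (a i) (r i) := fun i => by
    rw [sum_clipRows hP hr, hPr]
  have hYc : ∀ j, ∑ i, Y i j = min (∑ i, X i j) (c j) :=
    sum_clipRows (fun j i => hX i j) hc
  obtain ⟨Q, hYQ, hQr, hQc⟩ := exists_ge_of_sum_le (Y := Y)
    (fun i => (sum_le_sum fun j _ => hYX i j).trans ((hXr i).trans_le (min_le_right _ _)))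
    (fun j => (hYc j).trans_le (min_le_right _ _)) hrc
  refine ⟨Q, fun i j => (hY i j).trans (hYQ i j), hQr, hQc, ?_⟩
  have hXb : ∀ j, ∑ i, X i j ≤ b j := fun j => hPc j ▸ sum_le_sum fun i _ => hXP i j
  have hYmass : ∑ i, min (a i) (r i) - ∑ j, |c j - b j| ≤ ∑ i, ∑ j, Y i j := by
    rw [sum_comm (f := fun i j => Y i j)]
    calc ∑ i, min (a i) (r i) - ∑ j, |c j - b j|
        = ∑ j, (∑ i, X i j - |c j - b j|) := by
          rw [sum_sub_distrib, sum_comm, ← sum_congr rfl fun i _ => hXr i]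
      _ ≤ ∑ j, ∑ i, Y i j := sum_le_sum fun j _ => (hYc j).symm ▸ sub_abs_sub_le_min (hXb j)
  calc ∑ i, ∑ j, |P i j - Q i j|
      ≤ ∑ i, ∑ j, (|P i j - Y i j| + |Q i j - Y i j|) :=
        sum_le_sum fun i _ => sum_le_sum fun j _ => by
          rw [abs_sub_comm (Q i j)]; exact abs_sub_le _ _ _
    _ = ∑ i, a i + ∑ i, r i - 2 * ∑ i, ∑ j, Y i j := by
        rw [sum_congr rfl fun i _ => sum_add_distrib, sum_add_distrib,
          sum_sum_abs_sub_of_le fun i j => (hYX i j).trans (hXP i j),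
          sum_sum_abs_sub_of_le hYQ, sum_congr rfl fun i _ => hPr i,
          sum_congr rfl fun i _ => hQr i]
        ring
    _ ≤ ∑ i, |r i - a i| + 2 * ∑ j, |c j - b j| := by
        rw [← sum_congr rfl fun i _ => add_sub_two_mul_min (a i) (r i), sum_sub_distrib,
          sum_add_distrib, ← mul_sum]
        linarith

end Rounding

theorem rounded_plan_cost_bound_general_general {n : ℕ} (a b : Fin n → ℝ)
    (C : Matrix (Fin n) (Fin n) ℝ) (γ : ℝ) (hγ : 0 < γ)
    (ha1 : ∑ i, a i = 1) (hb1 : ∑ j, b j = 1)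
    (u v : Fin n → ℝ) (hu : ∀ i, 0 < u i) (hv : ∀ j, 0 < v j)
    (B : Matrix (Fin n) (Fin n) ℝ)
    (hB : ∀ i j, B i j = u i * Real.exp (-C i j / γ) * v j)
    (E : ℝ)
    (hE : E = (∑ i, |(∑ j, B i j) - a i|) + (∑ j, |(∑ i, B i j) - b j|))
    (Bhat : Matrix (Fin n) (Fin n) ℝ)
    (hclose : ∑ i, ∑ j, |B i j - Bhat i j| ≤ 2 * E) :
    ∀ P : Matrix (Fin n) (Fin n) ℝ,
      (∀ i j, 0 ≤ P i j) → (∀ i, ∑ j, P i j = a i) → (∀ j, ∑ i, P i j = b j) →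
      ∑ i, ∑ j, C i j * Bhat i j ≤
        (∑ i, ∑ j, C i j * P i j) + (2 + E) * γ * Real.log n +
          4 * E * (⨆ i, ⨆ j, |C i j|) := by
  intro P hP hPr hPc
  have hn : 0 < n := Nat.pos_of_ne_zero fun h => by subst h; simp at ha1
  have : Nonempty (Fin n) := ⟨⟨0, hn⟩⟩
  have hBpos : ∀ i j, 0 < B i j := fun i j => by
    rw [hB]; exact mul_pos (mul_pos (hu i) (exp_pos _)) (hv j)
  obtain ⟨Q, hQ, hQr, hQc, hPQ⟩ := exists_marginals_eq_sum_sum_abs_sub_le hP hPr hPc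
    (fun i => sum_nonneg fun j _ => (hBpos i j).le)
    (fun j => sum_nonneg fun i _ => (hBpos i j).le) sum_comm
  have hErow : 0 ≤ ∑ i, |(∑ j, B i j) - a i| := sum_nonneg fun i _ => abs_nonneg _
  have hEcol : 0 ≤ ∑ j, |(∑ i, B i j) - b j| := sum_nonneg fun j _ => abs_nonneg _
  have hmass : 2 * ∑ i, ∑ j, B i j ≤ 2 + E := by
    have hrow := abs_sum_le_sum_abs (fun i => (∑ j, B i j) - a i) univ
    have hcol := abs_sum_le_sum_abs (fun j => (∑ i, B i j) - b j) univ
    rw [sum_sub_distrib, ha1] at hrow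
    rw [sum_sub_distrib, hb1, sum_comm] at hcol
    linarith [le_abs_self ((∑ i, ∑ j, B i j) - 1)]
  set M := ⨆ i, ⨆ j, |C i j|
  have hM : ∀ i j, |C i j| ≤ M := fun i j =>
    (le_ciSup (Finite.bddAbove_range _) j).trans
      (le_ciSup (f := fun i => ⨆ j, |C i j|) (Finite.bddAbove_range _) i)
  have hM0 : 0 ≤ M := (abs_nonneg _).trans (hM ⟨0, hn⟩ ⟨0, hn⟩)
  have hlog : log ((n : ℝ) * n) = 2 * log n := by
    rw [log_mul (by positivity) (by positivity)]; ring
  have hent := sum_sum_mul_le_of_eq_diag_mul_exp_mul_diag hγ hu hv hB hQ hQr hQc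
  simp only [Fintype.card_fin, hlog] at hent
  calc ∑ i, ∑ j, C i j * Bhat i j
      ≤ ∑ i, ∑ j, C i j * B i j + M * (2 * E) :=
        (sum_sum_mul_le_add_mul_sum_sum_abs_sub hM).trans (by gcongr)
    _ ≤ ∑ i, ∑ j, C i j * Q i j + (2 + E) * γ * log n + M * (2 * E) := by
        have hγlog : 0 ≤ γ * log n := mul_nonneg hγ.le (log_natCast_nonneg n)
        linarith [mul_le_mul_of_nonneg_right hmass hγlog]
    _ ≤ ∑ i, ∑ j, C i j * P i j + (2 + E) * γ * log n + 4 * E * M := by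
        have hQP := sum_sum_mul_le_add_mul_sum_sum_abs_sub hM (X := Q) (Y := P)
        have hPQE : M * ∑ i, ∑ j, |P i j - Q i j| ≤ M * (2 * E) := by
          gcongr
          linarith
        linarith

/-- **Approximation bound after rounding, general (non-probability) case**
(Lemma of the paper for Greenkhorn).  Let `a, b` be probability vectors, `C ≥ 0`,
`γ > 0`, `K = exp(−C/γ)`, and `B = diag(u) K diag(v)` with `u, v > 0` (not
necessarily a probability matrix).  Set `E = ‖B𝟏 − a‖₁ + ‖Bᵀ𝟏 − b‖₁`.  Then any
`B̂ ∈ Π(a,b)` with `‖B − B̂‖₁ ≤ 2E` satisfies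
`⟨C,B̂⟩ ≤ min_{P ∈ Π(a,b)} ⟨C,P⟩ + (2 + E)γ log n + 4E‖C‖_∞`. -/
theorem rounded_plan_cost_bound_general {n : ℕ} (a b : Fin n → ℝ)
    (C : Matrix (Fin n) (Fin n) ℝ) (γ : ℝ) (hγ : 0 < γ)
    (ha0 : ∀ i, 0 ≤ a i) (hb0 : ∀ j, 0 ≤ b j)
    (ha1 : ∑ i, a i = 1) (hb1 : ∑ j, b j = 1)
    (hC : ∀ i j, 0 ≤ C i j)
    (u v : Fin n → ℝ) (hu : ∀ i, 0 < u i) (hv : ∀ j, 0 < v j)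
    (B : Matrix (Fin n) (Fin n) ℝ)
    (hB : ∀ i j, B i j = u i * Real.exp (-C i j / γ) * v j)
    (E : ℝ)
    (hE : E = (∑ i, |(∑ j, B i j) - a i|) + (∑ j, |(∑ i, B i j) - b j|))
    (Bhat : Matrix (Fin n) (Fin n) ℝ)
    (hBhat0 : ∀ i j, 0 ≤ Bhat i j)
    (hBhatr : ∀ i, ∑ j, Bhat i j = a i)
    (hBhatc : ∀ j, ∑ i, Bhat i j = b j)
    (hclose : ∑ i, ∑ j, |B i j - Bhat i j| ≤ 2 * E) :
    ∀ P : Matrix (Fin n) (Fin n) ℝ,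
      (∀ i j, 0 ≤ P i j) → (∀ i, ∑ j, P i j = a i) → (∀ j, ∑ i, P i j = b j) →
      ∑ i, ∑ j, C i j * Bhat i j ≤
        (∑ i, ∑ j, C i j * P i j) + (2 + E) * γ * Real.log n +
          4 * E * (⨆ i, ⨆ j, |C i j|) :=
  rounded_plan_cost_bound_general_general a b C γ hγ ha1 hb1 u v hu hv B hB E hE Bhat hclose
end
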